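/- arXiv:1608.03882 — 2 statements merged into one kernel-verified Lean document; each statement's English description precedes it below -/
import Mathlib

section
/- Let p ≥ 1, k ≥ 1 and 0 ≤ r < p be integers, and set q = kp + r. Let L be the staircase lattice set L = {(j, q − j(k+1)) : 0 ≤ j ≤ r} ∪ {(r + j, (p − r − j)·k) : 0 ≤ j ≤ p − r}, i.e. the diagram consisting of r segments tr(1,k+1) followed by (p−r) segments tr(1,k) from (0,q) to (p,0). Then ν(L) = (p−1)(q−1) − r(p−r). -/
open Pointwise MeasureTheory Set

set_option maxHeartbeats 1000000

/-- The Newton polyhedron `Γ₊(T)`: the Minkowski sum of the convex hull of the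
(real images of the) lattice points of `T` with the nonnegative quadrant. -/
noncomputable def GammaPlus (T : Finset (ℕ × ℕ)) : Set (ℝ × ℝ) :=
  convexHull ℝ ((fun v : ℕ × ℕ => ((v.1 : ℝ), (v.2 : ℝ))) '' (T : Set (ℕ × ℕ))) +
    {v : ℝ × ℝ | 0 ≤ v.1 ∧ 0 ≤ v.2}

/-- `a(T)`: the smallest `x` with `(x,0) ∈ Γ₊(T)`. -/
noncomputable def axisA (T : Finset (ℕ × ℕ)) : ℝ :=
  sInf {x : ℝ | (x, (0 : ℝ)) ∈ GammaPlus T}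

/-- `b(T)`: the smallest `y` with `(0,y) ∈ Γ₊(T)`. -/
noncomputable def axisB (T : Finset (ℕ × ℕ)) : ℝ :=
  sInf {y : ℝ | ((0 : ℝ), y) ∈ GammaPlus T}

/-- `S(T)`: the Lebesgue area of the part of the nonnegative quadrant not in `Γ₊(T)`. -/
noncomputable def areaS (T : Finset (ℕ × ℕ)) : ℝ :=
  (volume ({v : ℝ × ℝ | 0 ≤ v.1 ∧ 0 ≤ v.2} \ GammaPlus T)).toReal

/-- The Newton number `ν(T) = 2 S(T) - a(T) - b(T) + 1`. -/
noncomputable def newtonNumber (T : Finset (ℕ × ℕ)) : ℝ :=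
  2 * areaS T - axisA T - axisB T + 1

/-- An integer `n` is attainable from `T` if `n = ν(T ∪ P)` for some finite `P ⊆ ℕ²`. -/
def Attainable (T : Finset (ℕ × ℕ)) (n : ℤ) : Prop :=
  ∃ P : Finset (ℕ × ℕ), (n : ℝ) = newtonNumber (T ∪ P)

def stairE (p k q : ℕ) : Set (ℝ × ℝ) :=
  {v | 0 ≤ v.1 ∧ 0 ≤ v.2 ∧ (q:ℝ) ≤ (k+1)*v.1 + v.2 ∧ (k:ℝ)*(p:ℝ) ≤ (k:ℝ)*v.1 + v.2}

lemma stairE_convex (p k q : ℕ) : Convex ℝ (stairE p k q) := by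
  intro x hx y hy a b ha hb hab
  obtain ⟨h1, h2, h3, h4⟩ := hx
  obtain ⟨g1, g2, g3, g4⟩ := hy
  refine ⟨?_, ?_, ?_, ?_⟩ <;>
    simp only [Prod.fst_add, Prod.snd_add, Prod.smul_fst, Prod.smul_snd, smul_eq_mul] <;>
    nlinarith [mul_le_mul_of_nonneg_left h3 ha, mul_le_mul_of_nonneg_left g3 hb,
      mul_le_mul_of_nonneg_left h4 ha, mul_le_mul_of_nonneg_left g4 hb,
      mul_nonneg ha h1, mul_nonneg hb g1, mul_nonneg ha h2, mul_nonneg hb g2]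

lemma gamma_eq (p k r q : ℕ) (hk : 1 ≤ k) (hr : r < p) (hq : q = k * p + r) :
    GammaPlus ((Finset.range (r + 1)).image (fun j => (j, q - j * (k + 1))) ∪
        (Finset.range (p - r + 1)).image (fun j => (r + j, (p - r - j) * k))) =
      stairE p k q := by
  have hq' : (q:ℝ) = k * p + r := by rw [hq]; push_cast; ring
  have hrp : (r:ℝ) < (p:ℝ) := by exact_mod_cast hr
  have hk' : (1:ℝ) ≤ (k:ℝ) := by exact_mod_cast hk
  set T := ((Finset.range (r + 1)).image (fun j => (j, q - j * (k + 1))) ∪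
        (Finset.range (p - r + 1)).image (fun j => (r + j, (p - r - j) * k))) with hT
  set S : Set (ℝ × ℝ) := (fun v : ℕ × ℕ => ((v.1 : ℝ), (v.2 : ℝ))) '' (T : Set (ℕ × ℕ)) with hS
  -- key points
  have hA : ((0:ℝ), (q:ℝ)) ∈ S := by
    refine ⟨(0, q - 0 * (k+1)), ?_, by norm_num⟩
    simp [hT, Finset.mem_union]
  have hC : ((r:ℝ), (k:ℝ)*((p:ℝ)-(r:ℝ))) ∈ S := by
    refine ⟨(r + 0, (p - r - 0) * k), ?_, ?_⟩
    · simp [hT, Finset.mem_union]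
    · simp [Nat.cast_sub hr.le]; ring
  have hB : ((p:ℝ), (0:ℝ)) ∈ S := by
    refine ⟨(r + (p - r), (p - r - (p - r)) * k), ?_, ?_⟩
    · simp [hT, Finset.mem_union]
    · simp [Nat.add_sub_cancel' hr.le]
  apply Set.Subset.antisymm
  · -- ⊆
    have himg : S ⊆ stairE p k q := by
      rintro _ ⟨v, hv, rfl⟩
      simp only [hT, Finset.coe_union, Set.mem_union, Finset.coe_image, Set.mem_image,
        Finset.mem_coe, Finset.mem_range] at hv
      rcases hv with ⟨j, hj, rfl⟩ | ⟨j, hj, rfl⟩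
      · have hj' : j ≤ r := by omega
        have hle : j * (k + 1) ≤ q := by
          calc j * (k+1) ≤ r * (k+1) := Nat.mul_le_mul_right _ hj'
          _ ≤ q := by rw [hq]; nlinarith [hr.le]
        have hcast : ((q - j * (k + 1) : ℕ) : ℝ) = (q:ℝ) - j * (k+1) := by
          push_cast [Nat.cast_sub hle]; ring
        refine ⟨by positivity, by positivity, ?_, ?_⟩ <;> simp only [hcast]
        · ring_nf; linarith
        · have : (j:ℝ) ≤ r := by exact_mod_cast hj'
          rw [hq']; ring_nf; nlinarith
      · have hj' : j ≤ p - r := by omega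
        have hcast : ((p - r - j : ℕ) : ℝ) = (p:ℝ) - r - j := by
          push_cast [Nat.cast_sub (by omega : r + j ≤ p), Nat.sub_sub]; ring
        have hjr : (j:ℝ) ≥ 0 := by positivity
        refine ⟨by positivity, ?_, ?_, ?_⟩ <;> push_cast <;> rw [hcast]
        · have : (r:ℝ) + j ≤ p := by
            have : r + j ≤ p := by omega
            exact_mod_cast this
          nlinarith
        · rw [hq']; nlinarith
        · nlinarith
    have hhull : convexHull ℝ S ⊆ stairE p k q :=
      convexHull_min himg (stairE_convex p k q)
    rintro _ ⟨h, hh, w, hw, rfl⟩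
    obtain ⟨e1, e2, e3, e4⟩ := hhull hh
    obtain ⟨w1, w2⟩ := hw
    refine ⟨?_, ?_, ?_, ?_⟩ <;> simp only [Prod.fst_add, Prod.snd_add] <;> nlinarith
  · -- ⊇
    rintro ⟨x, y⟩ ⟨h1, h2, h3, h4⟩
    simp only [stairE, Set.mem_setOf_eq] at h1 h2 h3 h4
    have hmem : ∀ h w : ℝ × ℝ, h ∈ convexHull ℝ S → 0 ≤ w.1 → 0 ≤ w.2 →
        h + w = (x, y) → (x, y) ∈ GammaPlus T := by
      intro h w hh hw1 hw2 heq
      exact ⟨h, hh, w, ⟨hw1, hw2⟩, heq⟩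
    by_cases hc1 : x ≤ r ∧ 0 < r
    · obtain ⟨hxr, hr0⟩ := hc1
      have hr0' : (0:ℝ) < r := by exact_mod_cast hr0
      set t : ℝ := x / r with ht
      have ht0 : 0 ≤ t := div_nonneg h1 hr0'.le
      have ht1 : t ≤ 1 := by rw [ht, div_le_one hr0']; exact hxr
      have hseg : ((x:ℝ), (q:ℝ) - (k+1)*x) ∈ segment ℝ ((0:ℝ), (q:ℝ)) ((r:ℝ), (k:ℝ)*((p:ℝ)-(r:ℝ))) := by
        refine ⟨1 - t, t, by linarith, ht0, by ring, ?_⟩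
        have htr : t * r = x := div_mul_cancel₀ x (ne_of_gt hr0')
        refine Prod.ext ?_ ?_ <;>
          simp only [Prod.smul_mk, smul_eq_mul, Prod.fst_add, Prod.snd_add, Prod.mk_add_mk]
        · simpa using htr
        · linear_combination (-((k:ℝ)+1)) * htr + (-t) * hq'
      exact hmem _ ((0:ℝ), y - ((q:ℝ) - (k+1)*x))
        (segment_subset_convexHull hA hC hseg) le_rfl (by simp only [Prod.snd]; linarith)
        (by refine Prod.ext (by simp) ?_; simp only [Prod.snd_add, Prod.snd]; ring)
    · have hrx : (r:ℝ) ≤ x := by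
        rcases not_and_or.mp hc1 with h | h
        · linarith [not_le.mp h]
        · have : r = 0 := by omega
          simp [this, h1]
      by_cases hc2 : x ≤ p
      · set t : ℝ := (x - r) / (p - r) with ht
        have hpr : (0:ℝ) < p - r := by linarith
        have ht0 : 0 ≤ t := div_nonneg (by linarith) hpr.le
        have ht1 : t ≤ 1 := by rw [ht, div_le_one hpr]; linarith
        have hseg : ((x:ℝ), (k:ℝ)*((p:ℝ)-x)) ∈ segment ℝ ((r:ℝ), (k:ℝ)*((p:ℝ)-(r:ℝ))) ((p:ℝ), (0:ℝ)) := by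
          refine ⟨1 - t, t, by linarith, ht0, by ring, ?_⟩
          have htr : t * (p - r) = x - r := div_mul_cancel₀ _ (ne_of_gt hpr)
          refine Prod.ext ?_ ?_ <;>
            simp only [Prod.smul_mk, smul_eq_mul, Prod.fst_add, Prod.snd_add, Prod.mk_add_mk]
          · linear_combination htr
          · linear_combination (-(k:ℝ)) * htr
        exact hmem _ ((0:ℝ), y - (k:ℝ)*((p:ℝ)-x))
          (segment_subset_convexHull hC hB hseg) le_rfl (by simp only [Prod.snd]; nlinarith)
          (by refine Prod.ext (by simp) ?_; simp only [Prod.snd_add, Prod.snd]; ring)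
      · exact hmem ((p:ℝ), (0:ℝ)) (x - p, y)
          (subset_convexHull ℝ S hB) (by simp; linarith [not_le.mp hc2]) h2
          (by refine Prod.ext ?_ ?_ <;> simp)

lemma axisA_set (p k r q : ℕ) (hk : 1 ≤ k) (hr : r < p) (hq : q = k * p + r) :
    {x : ℝ | (x, (0:ℝ)) ∈ stairE p k q} = Set.Ici (p:ℝ) := by
  have hq' : (q:ℝ) = k * p + r := by rw [hq]; push_cast; ring
  have hrp : (r:ℝ) < (p:ℝ) := by exact_mod_cast hr
  have hk' : (1:ℝ) ≤ (k:ℝ) := by exact_mod_cast hk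
  ext x
  simp only [stairE, Set.mem_setOf_eq, Set.mem_Ici]
  constructor
  · rintro ⟨h1, -, h3, h4⟩
    nlinarith
  · intro hx
    refine ⟨by linarith, le_rfl, ?_, ?_⟩
    · rw [hq']; nlinarith
    · nlinarith

lemma axisB_set (p k r q : ℕ) (hk : 1 ≤ k) (hr : r < p) (hq : q = k * p + r) :
    {y : ℝ | ((0:ℝ), y) ∈ stairE p k q} = Set.Ici (q:ℝ) := by
  have hq' : (q:ℝ) = k * p + r := by rw [hq]; push_cast; ring
  have hr' : (0:ℝ) ≤ (r:ℝ) := by positivity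
  ext y
  simp only [stairE, Set.mem_setOf_eq, Set.mem_Ici]
  constructor
  · rintro ⟨-, -, h3, -⟩; linarith
  · intro hy
    refine ⟨le_rfl, le_trans (Nat.cast_nonneg q) hy, by linarith, by rw [hq'] at hy; linarith⟩

noncomputable def stairF (p k q : ℕ) : ℝ → ℝ :=
  fun x => max ((q:ℝ) - ((k:ℝ)+1)*x) ((k:ℝ)*((p:ℝ) - x))

lemma diff_eq (p k r q : ℕ) (hk : 1 ≤ k) (hr : r < p) (hq : q = k * p + r) :
    {v : ℝ × ℝ | 0 ≤ v.1 ∧ 0 ≤ v.2} \ stairE p k q =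
      {v : ℝ × ℝ | 0 ≤ v.1 ∧ 0 ≤ v.2 ∧ v.2 < stairF p k q v.1} := by
  ext ⟨x, y⟩
  simp only [Set.mem_diff, Set.mem_setOf_eq, stairE, stairF, not_and_or, not_le, lt_max_iff]
  constructor
  · rintro ⟨⟨h1, h2⟩, h⟩
    refine ⟨h1, h2, ?_⟩
    rcases h with h | h | h | h
    · linarith
    · linarith
    · left; linarith
    · right; nlinarith
  · rintro ⟨h1, h2, h⟩
    refine ⟨⟨h1, h2⟩, ?_⟩
    rcases h with h | h
    · right; right; left; linarith
    · right; right; right; nlinarith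

lemma stairF_cont (p k q : ℕ) : Continuous (stairF p k q) := by
  unfold stairF; fun_prop

lemma int_lin (a b c d : ℝ) : ∫ x in a..b, (c - d*x) = c*(b-a) - d*(b^2-a^2)/2 := by
  have h : ∀ x ∈ Set.uIcc a b, HasDerivAt (fun y : ℝ => c*y - d/2*y^2) (c - d*x) x := by
    intro x _
    have h1 : HasDerivAt (fun y : ℝ => c*y) (c*1) x := (hasDerivAt_id x).const_mul c
    have h2 : HasDerivAt (fun y : ℝ => d/2*y^2) (d/2*(↑2*x^1)) x :=
      (hasDerivAt_pow 2 x).const_mul (d/2)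
    exact (h1.sub h2).congr_deriv (by ring)
  rw [intervalIntegral.integral_eq_sub_of_hasDerivAt h
    (Continuous.intervalIntegrable (by fun_prop) _ _)]
  ring

lemma volume_D (p k r q : ℕ) (hk : 1 ≤ k) (hr : r < p) (hq : q = k * p + r) :
    volume {v : ℝ × ℝ | 0 ≤ v.1 ∧ 0 ≤ v.2 ∧ v.2 < stairF p k q v.1} =
      ENNReal.ofReal ((q:ℝ)*(r:ℝ) - ((k:ℝ)+1)*(r:ℝ)^2/2 + (k:ℝ)*((p:ℝ)-(r:ℝ))^2/2) := by
  have hq' : (q:ℝ) = k * p + r := by rw [hq]; push_cast; ring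
  have hrp : (r:ℝ) < (p:ℝ) := by exact_mod_cast hr
  have hk' : (1:ℝ) ≤ (k:ℝ) := by exact_mod_cast hk
  have hr0 : (0:ℝ) ≤ (r:ℝ) := by positivity
  set f := stairF p k q with hf
  set D : Set (ℝ × ℝ) := {v : ℝ × ℝ | 0 ≤ v.1 ∧ 0 ≤ v.2 ∧ v.2 < f v.1} with hD
  set R : Set (ℝ × ℝ) := regionBetween (fun _ => (0:ℝ)) f (Set.Ioo 0 (p:ℝ)) with hR
  have hsub : R ⊆ D := by
    rintro ⟨x, y⟩ ⟨hx, hy⟩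
    exact ⟨hx.1.le, hy.1.le, hy.2⟩
  have hdiff : D \ R ⊆ {v : ℝ × ℝ | v.1 = 0} ∪ {v : ℝ × ℝ | v.2 = 0} := by
    rintro ⟨x, y⟩ ⟨⟨h1, h2, h3⟩, hnr⟩
    by_contra hcon
    simp only [Set.mem_union, Set.mem_setOf_eq, not_or] at hcon
    have hx0 : 0 < x := lt_of_le_of_ne h1 (Ne.symm hcon.1)
    have hy0 : 0 < y := lt_of_le_of_ne h2 (Ne.symm hcon.2)
    have hxp : x < p := by
      by_contra hxp
      push_neg at hxp
      have : f x ≤ 0 := by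
        apply max_le
        · rw [hq']; nlinarith
        · nlinarith
      linarith
    exact hnr ⟨⟨hx0, hxp⟩, hy0, h3⟩
  have n1 : volume {v : ℝ × ℝ | v.1 = 0} = 0 := by
    have : {v : ℝ × ℝ | v.1 = 0} = ({0} : Set ℝ) ×ˢ (Set.univ : Set ℝ) := by
      ext ⟨a, b⟩; simp [eq_comm]
    rw [this, Measure.volume_eq_prod ℝ ℝ, Measure.prod_prod]
    simp
  have n2 : volume {v : ℝ × ℝ | v.2 = 0} = 0 := by
    have : {v : ℝ × ℝ | v.2 = 0} = (Set.univ : Set ℝ) ×ˢ ({0} : Set ℝ) := by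
      ext ⟨a, b⟩; simp [eq_comm]
    rw [this, Measure.volume_eq_prod ℝ ℝ, Measure.prod_prod]
    simp
  have hae : D =ᵐ[volume] R := by
    rw [Filter.eventuallyEq_set]
    apply MeasureTheory.ae_iff.mpr
    refine measure_mono_null ?_ (measure_union_null n1 n2)
    intro v hv
    simp only [Set.mem_setOf_eq] at hv
    by_cases hvD : v ∈ D
    · exact hdiff ⟨hvD, fun hvR => hv (iff_of_true hvD hvR)⟩
    · exact absurd (iff_of_false hvD (fun hvR => hvD (hsub hvR))) hv
  rw [measure_congr hae, hR, Measure.volume_eq_prod ℝ ℝ]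
  have hint : IntegrableOn f (Set.Ioo 0 (p:ℝ)) volume :=
    ((stairF_cont p k q).integrableOn_Icc).mono_set Set.Ioo_subset_Icc_self
  rw [volume_regionBetween_eq_integral (integrableOn_const measure_Ioo_lt_top.ne)
      hint measurableSet_Ioo
      (fun x hx => by
        simp only [hf, stairF]
        have : (k:ℝ)*((p:ℝ) - x) ≥ 0 := by nlinarith [hx.2]
        exact le_max_of_le_right this)]
  congr 1
  have hsub0 : f - (fun _ : ℝ => (0:ℝ)) = f := by funext x; simp
  rw [hsub0, ← MeasureTheory.integral_Ioc_eq_integral_Ioo,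
    ← intervalIntegral.integral_of_le (by positivity : (0:ℝ) ≤ (p:ℝ))]
  have i1 : IntervalIntegrable f volume 0 (r:ℝ) := (stairF_cont p k q).intervalIntegrable _ _
  have i2 : IntervalIntegrable f volume (r:ℝ) (p:ℝ) := (stairF_cont p k q).intervalIntegrable _ _
  rw [← intervalIntegral.integral_add_adjacent_intervals i1 i2]
  have e1 : ∫ x in (0:ℝ)..(r:ℝ), f x = ∫ x in (0:ℝ)..(r:ℝ), ((q:ℝ) - ((k:ℝ)+1)*x) := by
    apply intervalIntegral.integral_congr
    intro x hx
    rw [Set.uIcc_of_le hr0] at hx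
    simp only [hf, stairF]
    apply max_eq_left
    rw [hq']; nlinarith [hx.1, hx.2]
  have e2 : ∫ x in (r:ℝ)..(p:ℝ), f x = ∫ x in (r:ℝ)..(p:ℝ), ((k:ℝ)*(p:ℝ) - (k:ℝ)*x) := by
    apply intervalIntegral.integral_congr
    intro x hx
    rw [Set.uIcc_of_le hrp.le] at hx
    simp only [hf, stairF]
    rw [max_eq_right (by rw [hq']; nlinarith [hx.1, hx.2])]
    ring
  rw [e1, e2]
  rw [int_lin, int_lin]
  ring

/-- the staircase diagram `r·tr(1,k+1) + (p-r)·tr(1,k)` from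
`(0,q)` to `(p,0)`, `q = kp + r`, has Newton number `(p-1)(q-1) - r(p-r)`. -/
theorem stmt_17 (p k r q : ℕ) (hp : 1 ≤ p) (hk : 1 ≤ k) (hr : r < p)
    (hq : q = k * p + r) :
    newtonNumber
      ((Finset.range (r + 1)).image (fun j => (j, q - j * (k + 1))) ∪
        (Finset.range (p - r + 1)).image (fun j => (r + j, (p - r - j) * k))) =
      ((p : ℝ) - 1) * ((q : ℝ) - 1) - (r : ℝ) * ((p : ℝ) - (r : ℝ)) := by
  have hq' : (q:ℝ) = k * p + r := by rw [hq]; push_cast; ring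
  have hrp : (r:ℝ) < (p:ℝ) := by exact_mod_cast hr
  have hk' : (1:ℝ) ≤ (k:ℝ) := by exact_mod_cast hk
  have hg := gamma_eq p k r q hk hr hq
  have ha : axisA ((Finset.range (r + 1)).image (fun j => (j, q - j * (k + 1))) ∪
        (Finset.range (p - r + 1)).image (fun j => (r + j, (p - r - j) * k))) = (p:ℝ) := by
    unfold axisA
    rw [hg]
    rw [axisA_set p k r q hk hr hq]
    exact csInf_Ici
  have hb : axisB ((Finset.range (r + 1)).image (fun j => (j, q - j * (k + 1))) ∪
        (Finset.range (p - r + 1)).image (fun j => (r + j, (p - r - j) * k))) = (q:ℝ) := by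
    unfold axisB
    rw [hg]
    rw [axisB_set p k r q hk hr hq]
    exact csInf_Ici
  have hs : areaS ((Finset.range (r + 1)).image (fun j => (j, q - j * (k + 1))) ∪
        (Finset.range (p - r + 1)).image (fun j => (r + j, (p - r - j) * k))) =
      (q:ℝ)*(r:ℝ) - ((k:ℝ)+1)*(r:ℝ)^2/2 + (k:ℝ)*((p:ℝ)-(r:ℝ))^2/2 := by
    unfold areaS
    rw [hg, diff_eq p k r q hk hr hq, volume_D p k r q hk hr hq]
    have hnn : (0:ℝ) ≤ (q:ℝ)*(r:ℝ) - ((k:ℝ)+1)*(r:ℝ)^2/2 + (k:ℝ)*((p:ℝ)-(r:ℝ))^2/2 := by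
      have : (q:ℝ)*(r:ℝ) - ((k:ℝ)+1)*(r:ℝ)^2/2 + (k:ℝ)*((p:ℝ)-(r:ℝ))^2/2 =
          ((k:ℝ)*(p:ℝ)^2 + (r:ℝ)^2)/2 := by linear_combination (r:ℝ) * hq'
      rw [this]; positivity
    rw [ENNReal.toReal_ofReal hnn]
  unfold newtonNumber
  rw [ha, hb, hs]
  linear_combination (2*(r:ℝ) - (p:ℝ)) * hq'
end

section
/- Let p ≥ 3 and κ ≥ 1 be integers with κ(p−2) ≥ 3. Then ν({(0, κp + 1), (2, κ(p−2) − 2), (p, 0)}) = (p−1)(κp−1) − (2p−1); i.e. this deformation realizes the Newton number ν(tr(p,κp)) − (2p−1). -/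
open Pointwise MeasureTheory

def Kset (K P : ℝ) : Set (ℝ × ℝ) :=
  {v : ℝ × ℝ | 0 ≤ v.1 ∧ 0 ≤ v.2 ∧ 2 * (K * P + 1) ≤ (2 * K + 3) * v.1 + 2 * v.2 ∧
    P * (K * (P - 2) - 2) ≤ (K * (P - 2) - 2) * v.1 + (P - 2) * v.2}

lemma lin_comb (c d : ℝ) : IsLinearMap ℝ (fun v : ℝ × ℝ => c * v.1 + d * v.2) := by
  constructor
  · intro u v; simp only [Prod.fst_add, Prod.snd_add]; ring
  · intro r v; simp only [Prod.smul_fst, Prod.smul_snd, smul_eq_mul]; ring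

lemma Kset_convex (K P : ℝ) : Convex ℝ (Kset K P) := by
  have h : Kset K P = {v : ℝ × ℝ | 0 ≤ 1 * v.1 + 0 * v.2} ∩ {v : ℝ × ℝ | 0 ≤ 0 * v.1 + 1 * v.2}
      ∩ {v : ℝ × ℝ | 2 * (K * P + 1) ≤ (2 * K + 3) * v.1 + 2 * v.2}
      ∩ {v : ℝ × ℝ | P * (K * (P - 2) - 2) ≤ (K * (P - 2) - 2) * v.1 + (P - 2) * v.2} := by
    ext v; simp [Kset]; constructor <;> intro h <;> tauto
  rw [h]
  exact (((convex_halfSpace_ge (lin_comb 1 0) 0).inter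
    (convex_halfSpace_ge (lin_comb 0 1) 0)).inter
    (convex_halfSpace_ge (lin_comb (2*K+3) 2) _)).inter
    (convex_halfSpace_ge (lin_comb (K*(P-2)-2) (P-2)) _)

lemma gamma_eq_Kset (K P : ℝ) (hK : 1 ≤ K) (hP : 3 ≤ P) (h3 : 3 ≤ K * (P - 2)) :
    convexHull ℝ ({((0 : ℝ), K * P + 1), ((2 : ℝ), K * (P - 2) - 2), (P, (0 : ℝ))} :
        Set (ℝ × ℝ)) + {v : ℝ × ℝ | 0 ≤ v.1 ∧ 0 ≤ v.2} = Kset K P := by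
  have hP2 : (0 : ℝ) < P - 2 := by linarith
  apply Set.Subset.antisymm
  · intro z hz
    rw [Set.mem_add] at hz
    obtain ⟨u, hu, w, hw, rfl⟩ := hz
    have hhull : convexHull ℝ ({((0 : ℝ), K * P + 1), ((2 : ℝ), K * (P - 2) - 2), (P, (0 : ℝ))} :
        Set (ℝ × ℝ)) ⊆ Kset K P := by
      apply convexHull_min ?_ (Kset_convex K P)
      intro v hv
      simp only [Set.mem_insert_iff, Set.mem_singleton_iff] at hv
      rcases hv with rfl | rfl | rfl <;> refine ⟨?_, ?_, ?_, ?_⟩ <;> dsimp only <;> nlinarith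
    obtain ⟨hu1, hu2, hu3, hu4⟩ := hhull hu
    obtain ⟨hw1, hw2⟩ := hw
    refine ⟨?_, ?_, ?_, ?_⟩ <;>
    · simp only [Prod.fst_add, Prod.snd_add]
      nlinarith
  · intro v hv
    obtain ⟨hv1, hv2, hv3, hv4⟩ := hv
    rw [Set.mem_add]
    rcases le_or_gt v.1 2 with hc | hc
    · set t : ℝ := v.1 / 2 with ht
      have ht0 : 0 ≤ t := by positivity
      have ht1 : t ≤ 1 := by rw [ht]; linarith
      refine ⟨(1 - t) • ((0 : ℝ), K * P + 1) + t • ((2 : ℝ), K * (P - 2) - 2), ?_,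
        (0, v.2 - ((1 - t) * (K * P + 1) + t * (K * (P - 2) - 2))), ⟨le_refl _, ?_⟩, ?_⟩
      · exact segment_subset_convexHull (Set.mem_insert _ _)
          (Set.mem_insert_of_mem _ (Set.mem_insert _ _)) ⟨1 - t, t, by linarith, ht0, by ring, rfl⟩
      · rw [ht]; linarith
      · simp only [Prod.smul_mk, smul_eq_mul, Prod.mk_add_mk, Prod.ext_iff]
        constructor
        · rw [ht]; ring
        · ring
    · rcases le_or_gt v.1 P with hc2 | hc2
      · set t : ℝ := (v.1 - 2) / (P - 2) with ht
        have ht0 : 0 ≤ t := by rw [ht]; exact div_nonneg (by linarith) (by linarith)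
        have ht1 : t ≤ 1 := by rw [ht, div_le_one hP2]; linarith
        have key : (1 - t) * (K * (P - 2) - 2) ≤ v.2 := by
          rw [ht, show 1 - (v.1 - 2) / (P - 2) = (P - v.1) / (P - 2) by field_simp; ring,
            div_mul_eq_mul_div, div_le_iff₀ hP2]
          nlinarith
        have hmem : (1 - t) • (((2 : ℝ), K * (P - 2) - 2) : ℝ × ℝ) + t • ((P, (0 : ℝ)) : ℝ × ℝ) ∈
            convexHull ℝ ({((0 : ℝ), K * P + 1), ((2 : ℝ), K * (P - 2) - 2), (P, (0 : ℝ))} :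
              Set (ℝ × ℝ)) := by
          have hseg : (1 - t) • (((2 : ℝ), K * (P - 2) - 2) : ℝ × ℝ) + t • ((P, (0 : ℝ)) : ℝ × ℝ) ∈
              segment ℝ (((2 : ℝ), K * (P - 2) - 2) : ℝ × ℝ) ((P, (0 : ℝ)) : ℝ × ℝ) :=
            ⟨1 - t, t, by linarith, ht0, by ring, rfl⟩
          exact segment_subset_convexHull (Set.mem_insert_of_mem _ (Set.mem_insert _ _))
            (Set.mem_insert_of_mem _ (Set.mem_insert_of_mem _ (Set.mem_singleton _))) hseg
        refine ⟨(1 - t) • (((2 : ℝ), K * (P - 2) - 2) : ℝ × ℝ) + t • ((P, (0 : ℝ)) : ℝ × ℝ), hmem,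
          (0, v.2 - (1 - t) * (K * (P - 2) - 2)),
          ⟨le_refl _, show (0:ℝ) ≤ v.2 - (1 - t) * (K * (P - 2) - 2) by linarith⟩, ?_⟩
        simp only [Prod.smul_mk, smul_eq_mul, Prod.mk_add_mk, Prod.ext_iff]
        constructor
        · rw [ht]; field_simp; ring
        · ring
      · refine ⟨(P, (0 : ℝ)), subset_convexHull ℝ _
          (Set.mem_insert_of_mem _ (Set.mem_insert_of_mem _ (Set.mem_singleton _))),
          (v.1 - P, v.2), ⟨show (0:ℝ) ≤ v.1 - P by linarith, hv2⟩, ?_⟩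
        simp only [Prod.mk_add_mk, Prod.ext_iff]
        constructor <;> simp

lemma KsetA (K P : ℝ) (hK : 1 ≤ K) (hP : 3 ≤ P) (h3 : 3 ≤ K * (P - 2)) :
    {x : ℝ | (x, (0 : ℝ)) ∈ Kset K P} = Set.Ici P := by
  ext x
  simp only [Kset, Set.mem_setOf_eq, Set.mem_Ici]

  constructor
  · rintro ⟨h1, -, -, h4⟩
    nlinarith
  · intro hx
    exact ⟨by linarith, le_refl _, by nlinarith, by nlinarith⟩

lemma KsetB (K P : ℝ) (hK : 1 ≤ K) (hP : 3 ≤ P) (h3 : 3 ≤ K * (P - 2)) :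
    {y : ℝ | ((0 : ℝ), y) ∈ Kset K P} = Set.Ici (K * P + 1) := by
  ext y
  simp only [Kset, Set.mem_setOf_eq, Set.mem_Ici]

  constructor
  · rintro ⟨-, h2, h3', -⟩
    linarith
  · intro hy
    exact ⟨le_refl _, by nlinarith, by nlinarith, by nlinarith⟩

noncomputable def gfun (K P : ℝ) : ℝ → ℝ := fun x =>
  max (K * P + 1 - (2 * K + 3) / 2 * x) ((K * (P - 2) - 2) * (P - x) / (P - 2))

lemma gfun_cont (K P : ℝ) : Continuous (gfun K P) := by
  unfold gfun
  exact (continuous_const.sub (continuous_const.mul continuous_id)).max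
    ((continuous_const.mul (continuous_const.sub continuous_id)).div_const _)

lemma diff_eq_s19 (K P : ℝ) (hK : 1 ≤ K) (hP : 3 ≤ P) (h3 : 3 ≤ K * (P - 2)) :
    {v : ℝ × ℝ | 0 ≤ v.1 ∧ 0 ≤ v.2} \ Kset K P =
      {v : ℝ × ℝ | v.1 ∈ Set.Icc 0 P ∧ v.2 ∈ Set.Ico 0 (gfun K P v.1)} := by
  have hP2 : (0 : ℝ) < P - 2 := by linarith
  ext v
  simp only [Set.mem_diff, Kset, Set.mem_setOf_eq, Set.mem_Icc, Set.mem_Ico, not_and, not_le,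
    gfun, lt_max_iff]
  constructor
  · rintro ⟨⟨h1, h2⟩, hnot⟩
    have hor : (2 * K + 3) * v.1 + 2 * v.2 < 2 * (K * P + 1) ∨
        (K * (P - 2) - 2) * v.1 + (P - 2) * v.2 < P * (K * (P - 2) - 2) := by
      by_contra hcon
      push_neg at hcon
      exact absurd (hnot h1 h2 hcon.1) (not_lt.mpr hcon.2)
    have hvP : v.1 ≤ P := by
      by_contra hgt
      push_neg at hgt
      rcases hor with h | h <;> nlinarith
    refine ⟨⟨h1, hvP⟩, h2, ?_⟩
    rcases hor with h | h
    · left; linarith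
    · right
      rw [lt_div_iff₀ hP2]
      nlinarith
  · rintro ⟨⟨h1, hvP⟩, h2, hlt⟩
    refine ⟨⟨h1, h2⟩, ?_⟩
    intro _ _ hc1
    rcases hlt with h | h
    · linarith
    · rw [lt_div_iff₀ hP2] at h
      nlinarith

lemma volume_diff (K P : ℝ) (hK : 1 ≤ K) (hP : 3 ≤ P) (h3 : 3 ≤ K * (P - 2)) :
    volume ({v : ℝ × ℝ | 0 ≤ v.1 ∧ 0 ≤ v.2} \ Kset K P) =
      ENNReal.ofReal ((K * P ^ 2 - 2 * P + 2) / 2) := by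
  have hP2 : (0 : ℝ) < P - 2 := by linarith
  have hg := gfun_cont K P
  rw [diff_eq_s19 K P hK hP h3]
  set D : Set (ℝ × ℝ) := {v : ℝ × ℝ | v.1 ∈ Set.Icc 0 P ∧ v.2 ∈ Set.Ico 0 (gfun K P v.1)} with hD
  set R : Set (ℝ × ℝ) := regionBetween (fun _ => (0 : ℝ)) (gfun K P) (Set.Icc 0 P) with hR
  have hN : volume ((Set.Icc (0:ℝ) P) ×ˢ ({0} : Set ℝ)) = 0 := by
    rw [MeasureTheory.Measure.volume_eq_prod, MeasureTheory.Measure.prod_prod,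
      Real.volume_singleton, mul_zero]
  have hRD : R ⊆ D := by
    rintro v ⟨hv1, hv2⟩
    exact ⟨hv1, le_of_lt hv2.1, hv2.2⟩
  have hDR : D ⊆ R ∪ (Set.Icc (0:ℝ) P) ×ˢ ({0} : Set ℝ) := by
    rintro v ⟨hv1, hv2, hv3⟩
    rcases eq_or_lt_of_le hv2 with h | h
    · exact Or.inr ⟨hv1, h.symm⟩
    · exact Or.inl ⟨hv1, h, hv3⟩
  have hvol : volume D = volume R := by
    apply le_antisymm
    · calc volume D ≤ volume (R ∪ (Set.Icc (0:ℝ) P) ×ˢ ({0} : Set ℝ)) := measure_mono hDR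
        _ ≤ volume R + volume ((Set.Icc (0:ℝ) P) ×ˢ ({0} : Set ℝ)) := measure_union_le _ _
        _ = volume R := by rw [hN, add_zero]
    · exact measure_mono hRD
  rw [hvol, hR, MeasureTheory.Measure.volume_eq_prod]
  have hgnn : ∀ x ∈ Set.Icc (0:ℝ) P, (fun _ => (0:ℝ)) x ≤ gfun K P x := by
    intro x hx
    refine le_max_of_le_right ?_
    exact div_nonneg (mul_nonneg (by linarith) (by linarith [hx.2])) (by linarith)
  rw [volume_regionBetween_eq_integral (integrableOn_const measure_Icc_lt_top.ne)
    (hg.integrableOn_Icc) measurableSet_Icc hgnn]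
  congr 1
  have hsub : (gfun K P - fun _ => (0:ℝ)) = gfun K P := by
    funext x; simp
  rw [hsub, MeasureTheory.integral_Icc_eq_integral_Ioc,
    ← intervalIntegral.integral_of_le (by linarith : (0:ℝ) ≤ P)]
  have hi1 : IntervalIntegrable (gfun K P) volume 0 2 := hg.intervalIntegrable _ _
  have hi2 : IntervalIntegrable (gfun K P) volume 2 P := hg.intervalIntegrable _ _
  rw [← intervalIntegral.integral_add_adjacent_intervals hi1 hi2]
  have e1 : ∫ x in (0:ℝ)..2, gfun K P x = ∫ x in (0:ℝ)..2, (K * P + 1 - (2 * K + 3) / 2 * x) := by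
    apply intervalIntegral.integral_congr
    intro x hx
    rw [Set.uIcc_of_le (by norm_num : (0:ℝ) ≤ 2)] at hx
    apply max_eq_left
    rw [div_le_iff₀ hP2]
    nlinarith [mul_nonneg (by linarith [hx.2] : (0:ℝ) ≤ 2 - x) (by linarith : (0:ℝ) ≤ 3 * P / 2 - 1)]
  have e2 : ∫ x in (2:ℝ)..P, gfun K P x
      = ∫ x in (2:ℝ)..P, ((K * (P - 2) - 2) * (P - x) / (P - 2)) := by
    apply intervalIntegral.integral_congr
    intro x hx
    rw [Set.uIcc_of_le (by linarith : (2:ℝ) ≤ P)] at hx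
    apply max_eq_right
    rw [le_div_iff₀ hP2]
    nlinarith [mul_nonneg (by linarith [hx.1] : (0:ℝ) ≤ x - 2) (by linarith : (0:ℝ) ≤ 3 * P / 2 - 1)]
  rw [e1, e2]
  have hid : ∀ a b c d : ℝ, (∫ x in a..b, (c - d * x)) = c * (b - a) - d * ((b ^ 2 - a ^ 2) / 2) := by
    intro a b c d
    have hF : ∀ x : ℝ, HasDerivAt (fun y : ℝ => c * y - d / 2 * y ^ 2) (c - d * x) x := by
      intro x
      have h1 := (hasDerivAt_id x).const_mul c
      have h2 := (hasDerivAt_pow 2 x).const_mul (d / 2)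
      have h := h1.sub h2
      exact h.congr_deriv (by push_cast; ring)
    rw [intervalIntegral.integral_eq_sub_of_hasDerivAt (fun x _ => hF x)
      ((continuous_const.sub (continuous_const.mul continuous_id)).intervalIntegrable _ _)]
    ring
  have e3 : ∫ x in (2:ℝ)..P, ((K * (P - 2) - 2) * (P - x) / (P - 2))
      = ∫ x in (2:ℝ)..P, ((K * (P - 2) - 2) * P / (P - 2) - (K * (P - 2) - 2) / (P - 2) * x) :=
    intervalIntegral.integral_congr (fun x _ => by ring)
  have e4 : ∫ x in (0:ℝ)..2, (K * P + 1 - (2 * K + 3) / 2 * x)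
      = ∫ x in (0:ℝ)..2, ((K * P + 1) - (2 * K + 3) / 2 * x) :=
    intervalIntegral.integral_congr (fun x _ => by ring)
  rw [e4, e3, hid, hid]
  field_simp
  ring

/-- the deformation realizing the Newton number
`ν(tr(p,κp)) - (2p - 1)`. -/
theorem stmt_19 (p κ : ℕ) (hp : 3 ≤ p) (hκ : 1 ≤ κ) (h3 : 3 ≤ κ * (p - 2)) :
    newtonNumber {(0, κ * p + 1), (2, κ * (p - 2) - 2), (p, 0)} =
      ((p : ℝ) - 1) * ((κ : ℝ) * (p : ℝ) - 1) - (2 * (p : ℝ) - 1) := by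
  have hp2 : 2 ≤ p := by omega
  have h2 : 2 ≤ κ * (p - 2) := by omega
  have hK : (1:ℝ) ≤ (κ:ℝ) := by exact_mod_cast hκ
  have hP : (3:ℝ) ≤ (p:ℝ) := by exact_mod_cast hp
  have hc2 : ((κ * (p - 2) - 2 : ℕ) : ℝ) = (κ:ℝ) * ((p:ℝ) - 2) - 2 := by
    rw [Nat.cast_sub h2, Nat.cast_mul, Nat.cast_sub hp2]
    push_cast
    ring
  have h3r : (3:ℝ) ≤ (κ:ℝ) * ((p:ℝ) - 2) := by
    have : ((3:ℕ):ℝ) ≤ ((κ * (p - 2) : ℕ) : ℝ) := by exact_mod_cast h3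
    rw [Nat.cast_mul, Nat.cast_sub hp2] at this
    push_cast at this ⊢
    linarith
  have himg : GammaPlus {(0, κ * p + 1), (2, κ * (p - 2) - 2), (p, 0)} = Kset (κ:ℝ) (p:ℝ) := by
    rw [GammaPlus, ← gamma_eq_Kset (κ:ℝ) (p:ℝ) hK hP h3r]
    congr 1
    have hc1 : ((κ * p + 1 : ℕ) : ℝ) = (κ:ℝ) * (p:ℝ) + 1 := by push_cast; ring
    simp only [Finset.coe_insert, Finset.coe_singleton, Set.image_insert_eq,
      Set.image_singleton, hc1, hc2]
    norm_num
  rw [newtonNumber, areaS, axisA, axisB, himg, KsetA (κ:ℝ) (p:ℝ) hK hP h3r,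
    KsetB (κ:ℝ) (p:ℝ) hK hP h3r, csInf_Ici, csInf_Ici, volume_diff (κ:ℝ) (p:ℝ) hK hP h3r,
    ENNReal.toReal_ofReal (by nlinarith)]
  ring
end
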